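/- arXiv:math/0305400 — 7 statements merged into one kernel-verified Lean document; each statement's English description precedes it below -/
import Mathlib

section
/- Let (Ω, F, P) be a probability space, B ∈ F with π₀ = P(B) ∈ (0,1), G a sub-σ-algebra of F, and let X = P(B | G). For any measurable set J ⊆ [0, π₀), we have P(X ∈ J | B) ≤ P(X ∈ J | Bᶜ). -/
open MeasureTheory ProbabilityTheory

open scoped ENNReal

/-!
Let `A = {X ∈ J}`, an event of `G`. Over `A` the conditional probability `X = P(B | G)` integrates
to `P(B ∩ A)`, and `X < P(B)` on `A`, so `P(B ∩ A) ≤ P(B) P(A)`: the events `A` and `B` are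
negatively correlated. Hence `P(A | B) ≤ P(A)`, and since `P(A)` is the average of `P(A | B)` and
`P(A | Bᶜ)` with weights `P(B)` and `P(Bᶜ)`, also `P(A) ≤ P(A | Bᶜ)`.
-/

namespace ProbabilityTheory

variable {Ω : Type*} {m m0 : MeasurableSpace Ω} {μ : Measure Ω} {A B : Set Ω}

theorem cond_apply_le_of_measure_inter_le (hB : MeasurableSet B) (hAB : μ (B ∩ A) ≤ μ B * μ A) :
    μ[A | B] ≤ μ A := by
  rw [cond_apply hB]
  by_cases hB0 : μ B = 0
  · simp [measure_mono_null Set.inter_subset_left hB0]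
  by_cases hBtop : μ B = ∞
  · simp [hBtop]
  exact (ENNReal.inv_mul_le_iff hB0 hBtop).2 hAB

theorem le_cond_apply_of_mul_le_measure_inter [IsFiniteMeasure μ] (hB : MeasurableSet B)
    (hB0 : μ B ≠ 0) (hAB : μ B * μ A ≤ μ (B ∩ A)) : μ A ≤ μ[A | B] := by
  rw [cond_apply hB, ← ENNReal.div_eq_inv_mul,
    ENNReal.le_div_iff_mul_le (.inl hB0) (.inl (measure_ne_top μ B)), mul_comm]
  exact hAB

theorem measure_compl_mul_le_measure_compl_inter [IsProbabilityMeasure μ] (hB : MeasurableSet B)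
    (hAB : μ (B ∩ A) ≤ μ B * μ A) : μ Bᶜ * μ A ≤ μ (Bᶜ ∩ A) := by
  have hsplit : μ (B ∩ A) + μ (Bᶜ ∩ A) = μ A := by
    rw [Set.inter_comm B, Set.inter_comm Bᶜ, ← Set.sdiff_eq, measure_inter_add_sdiff A hB]
  have htotal : μ B * μ A + μ Bᶜ * μ A = μ A := by
    rw [← add_mul, measure_add_measure_compl hB, measure_univ, one_mul]
  refine (ENNReal.add_le_add_iff_left (ENNReal.mul_ne_top (measure_ne_top μ B)
    (measure_ne_top μ A))).1 ?_
  calc μ B * μ A + μ Bᶜ * μ A = μ (B ∩ A) + μ (Bᶜ ∩ A) := htotal.trans hsplit.symm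
    _ ≤ μ B * μ A + μ (Bᶜ ∩ A) := by gcongr

theorem measureReal_inter_le_of_condExp_indicator_le [IsFiniteMeasure μ] (hm : m ≤ m0)
    (hB : MeasurableSet B) (hA : MeasurableSet[m] A) {c : ℝ}
    (hc : ∀ x ∈ A, μ[B.indicator (fun _ => (1 : ℝ)) | m] x ≤ c) :
    μ.real (B ∩ A) ≤ c * μ.real A := by
  have hint : Integrable (B.indicator fun _ => (1 : ℝ)) μ := (integrable_const 1).indicator hB
  calc μ.real (B ∩ A) = ∫ x in A, B.indicator (fun _ => (1 : ℝ)) x ∂μ := by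
        simp [setIntegral_indicator hB, Set.inter_comm]
    _ = ∫ x in A, μ[B.indicator (fun _ => (1 : ℝ)) | m] x ∂μ :=
        (setIntegral_condExp hm hint hA).symm
    _ ≤ ∫ _ in A, c ∂μ :=
        setIntegral_mono_on integrable_condExp.integrableOn (integrableOn_const (measure_ne_top _ _))
          (hm _ hA) hc
    _ = c * μ.real A := by simp [mul_comm]

end ProbabilityTheory

theorem stmt_1_general {Ω : Type*} [m0 : MeasurableSpace Ω] (μ : Measure Ω) [IsProbabilityMeasure μ]
    (B : Set Ω) (hB : MeasurableSet B)
    (hB1 : (μ B).toReal < 1)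
    (m : MeasurableSpace Ω) (hm : m ≤ m0)
    (X : Ω → ℝ) (hX : X = MeasureTheory.condExp m μ (B.indicator fun _ => (1 : ℝ)))
    (J : Set ℝ) (hJ : MeasurableSet J) (hJsub : J ⊆ Set.Ico 0 ((μ B).toReal)) :
    μ[|B] (X ⁻¹' J) ≤ μ[|Bᶜ] (X ⁻¹' J) := by
  have hA : MeasurableSet[m] (X ⁻¹' J) := hX ▸ stronglyMeasurable_condExp.measurable hJ
  have hneg : μ (B ∩ X ⁻¹' J) ≤ μ B * μ (X ⁻¹' J) := by
    rw [← ENNReal.toReal_le_toReal (by finiteness) (by finiteness), ENNReal.toReal_mul]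
    exact measureReal_inter_le_of_condExp_indicator_le hm hB hA fun x hx => hX ▸ (hJsub hx).2.le
  have hBc : μ Bᶜ ≠ 0 := fun h => by simp [(prob_compl_eq_zero_iff hB).1 h] at hB1
  exact (cond_apply_le_of_measure_inter_le hB hneg).trans
    (le_cond_apply_of_mul_le_measure_inter hB.compl hBc
      (measure_compl_mul_le_measure_compl_inter hB hneg))

theorem stmt_1 {Ω : Type*} [m0 : MeasurableSpace Ω] (μ : Measure Ω) [IsProbabilityMeasure μ]
    (B : Set Ω) (hB : MeasurableSet B)
    (hB0 : 0 < (μ B).toReal) (hB1 : (μ B).toReal < 1)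
    (m : MeasurableSpace Ω) (hm : m ≤ m0)
    (X : Ω → ℝ) (hX : X = MeasureTheory.condExp m μ (B.indicator fun _ => (1 : ℝ)))
    (J : Set ℝ) (hJ : MeasurableSet J) (hJsub : J ⊆ Set.Ico 0 ((μ B).toReal)) :
    μ[|B] (X ⁻¹' J) ≤ μ[|Bᶜ] (X ⁻¹' J) :=
  stmt_1_general (m0 := m0) μ B hB hB1 m hm X hX J hJ hJsub
end

section
/- Let (Ω, F, P) be a probability space, B ∈ F with π₀ = P(B) ∈ (0,1), G a sub-σ-algebra of F, and X = P(B | G). For any measurable set J ⊆ (π₀, 1], we have P(X ∈ J | B) ≥ P(X ∈ J | Bᶜ). -/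
/-!
The event `A = {X ∈ J}` is `G`-measurable and `X > π₀` on it, so `P(B ∩ A) = ∫_A X ≥ π₀ P(A)`:
`A` is positively correlated with `B`, which gives `P(A | B) ≥ P(A) ≥ P(A | Bᶜ)`.
-/

open MeasureTheory ProbabilityTheory

namespace ProbabilityTheory

variable {Ω : Type*} {m m0 : MeasurableSpace Ω} {μ : Measure Ω} {A B : Set Ω}

theorem setIntegral_condExp_indicator_one [IsFiniteMeasure μ] (hm : m ≤ m0)
    (hB : MeasurableSet B) (hA : MeasurableSet[m] A) :
    ∫ x in A, μ[B.indicator fun _ => (1 : ℝ)|m] x ∂μ = μ.real (B ∩ A) := by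
  rw [setIntegral_condExp hm ((integrable_const 1).indicator hB) hA,
    integral_indicator hB, setIntegral_const, measureReal_restrict_apply hB, smul_eq_mul, mul_one]

theorem mul_measureReal_le_measureReal_inter [IsFiniteMeasure μ] (hm : m ≤ m0)
    (hB : MeasurableSet B) (hA : MeasurableSet[m] A) {c : ℝ}
    (hc : ∀ x ∈ A, c ≤ μ[B.indicator fun _ => (1 : ℝ)|m] x) :
    c * μ.real A ≤ μ.real (B ∩ A) := by
  rw [← setIntegral_condExp_indicator_one hm hB hA]
  exact setIntegral_ge_of_const_le_real (hm _ hA) (measure_ne_top μ A) hc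
    integrable_condExp.integrableOn

theorem cond_compl_le_cond_of_mul_le_inter [IsProbabilityMeasure μ] (hB : MeasurableSet B)
    (hB0 : μ B ≠ 0) (h : μ.real B * μ.real A ≤ μ.real (B ∩ A)) :
    μ[|Bᶜ] A ≤ μ[|B] A := by
  rcases eq_or_ne (μ Bᶜ) 0 with hBc | hBc
  · simp [cond_eq_zero_of_meas_eq_zero hBc]
  rw [← ENNReal.toReal_le_toReal (measure_ne_top _ _) (measure_ne_top _ _), cond_apply hB,
    cond_apply hB.compl, ENNReal.toReal_mul, ENNReal.toReal_mul, ENNReal.toReal_inv,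
    ENNReal.toReal_inv]
  simp only [← measureReal_def]
  have hp : 0 < μ.real B := ENNReal.toReal_pos hB0 (measure_ne_top μ B)
  have hq : 0 < μ.real Bᶜ := ENNReal.toReal_pos hBc (measure_ne_top μ _)
  have hsplit := measureReal_inter_add_sdiff (μ := μ) (s := A) hB
  rw [Set.inter_comm, Set.sdiff_eq] at hsplit
  rw [probReal_compl_eq_one_sub hB] at hq ⊢
  rw [Set.inter_comm Bᶜ, inv_mul_eq_div, inv_mul_eq_div, div_le_div_iff₀ hq hp]
  nlinarith

end ProbabilityTheory

theorem stmt_2_general {Ω : Type*} [m0 : MeasurableSpace Ω] (μ : Measure Ω) [IsProbabilityMeasure μ]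
    (B : Set Ω) (hB : MeasurableSet B)
    (hB0 : 0 < (μ B).toReal)
    (m : MeasurableSpace Ω) (hm : m ≤ m0)
    (X : Ω → ℝ) (hX : X = MeasureTheory.condExp m μ (B.indicator fun _ => (1 : ℝ)))
    (J : Set ℝ) (hJ : MeasurableSet J) (hJsub : J ⊆ Set.Ioc ((μ B).toReal) 1) :
    μ[|Bᶜ] (X ⁻¹' J) ≤ μ[|B] (X ⁻¹' J) := by
  subst hX
  have hA : MeasurableSet[m] (μ[B.indicator fun _ => (1 : ℝ)|m] ⁻¹' J) :=
    stronglyMeasurable_condExp.measurable hJ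
  refine cond_compl_le_cond_of_mul_le_inter hB (ENNReal.toReal_pos_iff.mp hB0).1.ne' ?_
  exact mul_measureReal_le_measureReal_inter hm hB hA fun x hx => (hJsub hx).1.le

theorem stmt_2 {Ω : Type*} [m0 : MeasurableSpace Ω] (μ : Measure Ω) [IsProbabilityMeasure μ]
    (B : Set Ω) (hB : MeasurableSet B)
    (hB0 : 0 < (μ B).toReal) (hB1 : (μ B).toReal < 1)
    (m : MeasurableSpace Ω) (hm : m ≤ m0)
    (X : Ω → ℝ) (hX : X = MeasureTheory.condExp m μ (B.indicator fun _ => (1 : ℝ)))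
    (J : Set ℝ) (hJ : MeasurableSet J) (hJsub : J ⊆ Set.Ioc ((μ B).toReal) 1) :
    μ[|Bᶜ] (X ⁻¹' J) ≤ μ[|B] (X ⁻¹' J) :=
  stmt_2_general (m0 := m0) μ B hB hB0 m hm X hX J hJ hJsub
end

section
/- Let (Ω, F, P) be a probability space, B ∈ F with π₀ = P(B) ∈ (0,1), G a sub-σ-algebra of F, and X = P(B | G). If the conditional distribution of X given B equals the conditional distribution of X given Bᶜ, then X = π₀ almost surely. -/
/-!
Since `X` is `m`-measurable, `∫_B X = ∫ X · 1_B = ∫ X · X`. Equal conditional laws give equal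
conditional means `E[X | B] = E[X | Bᶜ]`; as `E X = P(B)` is the mixture of these two means with
weights `P(B)` and `P(Bᶜ)`, both equal `P(B)`. Hence `E[X²] = ∫_B X = P(B)² = (E X)²`, so `X` has
variance zero.
-/

open MeasureTheory ProbabilityTheory

namespace MeasureTheory

variable {Ω : Type*} {m m0 : MeasurableSpace Ω} {μ : Measure Ω}

lemma integral_mul_condExp_of_bound (hm : m ≤ m0) [IsFiniteMeasure μ] {f g : Ω → ℝ}
    (hg : StronglyMeasurable[m] g) (hf : Integrable f μ) (c : ℝ)
    (hg_bound : ∀ᵐ ω ∂μ, ‖g ω‖ ≤ c) :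
    ∫ ω, g ω * μ[f | m] ω ∂μ = ∫ ω, g ω * f ω ∂μ := by
  calc ∫ ω, g ω * μ[f | m] ω ∂μ = ∫ ω, μ[g * f | m] ω ∂μ :=
        integral_congr_ae (condExp_stronglyMeasurable_mul_of_bound hm hg hf c hg_bound).symm
    _ = ∫ ω, g ω * f ω ∂μ := integral_condExp hm

lemma ae_abs_condExp_indicator_one_le (s : Set Ω) :
    ∀ᵐ ω ∂μ, |μ[s.indicator (fun _ ↦ (1 : ℝ)) | m] ω| ≤ 1 :=
  ae_bdd_abs_condExp_of_ae_bdd_abs <| .of_forall fun ω ↦ by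
    by_cases h : ω ∈ s <;> simp [h]

lemma integral_condExp_indicator_sq (hm : m ≤ m0) [IsFiniteMeasure μ] {s : Set Ω}
    (hs : MeasurableSet s) :
    ∫ ω, μ[s.indicator (fun _ ↦ (1 : ℝ)) | m] ω ^ 2 ∂μ
      = ∫ ω in s, μ[s.indicator (fun _ ↦ (1 : ℝ)) | m] ω ∂μ := by
  set X := μ[s.indicator (fun _ ↦ (1 : ℝ)) | m]
  calc ∫ ω, X ω ^ 2 ∂μ = ∫ ω, X ω * s.indicator (fun _ ↦ (1 : ℝ)) ω ∂μ := by
        simp_rw [sq]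
        exact integral_mul_condExp_of_bound hm stronglyMeasurable_condExp
          ((integrable_const 1).indicator hs) 1 (by simpa using ae_abs_condExp_indicator_one_le s)
    _ = ∫ ω in s, X ω ∂μ := by
        rw [← integral_indicator hs]
        congr 1 with ω
        by_cases h : ω ∈ s <;> simp [h]

end MeasureTheory

namespace ProbabilityTheory

variable {Ω : Type*} {m0 : MeasurableSpace Ω} {μ : Measure Ω} {X : Ω → ℝ}

lemma integral_cond (μ : Measure Ω) (s : Set Ω) (f : Ω → ℝ) :
    ∫ ω, f ω ∂μ[|s] = (μ s).toReal⁻¹ * ∫ ω in s, f ω ∂μ := by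
  simp [cond, integral_smul_measure]

lemma ae_eq_const_of_integral_sq_eq [IsProbabilityMeasure μ] (hX : MemLp X 2 μ) {c : ℝ}
    (hmean : ∫ ω, X ω ∂μ = c) (hsq : ∫ ω, X ω ^ 2 ∂μ = c ^ 2) :
    X =ᵐ[μ] fun _ ↦ c := by
  have hvar : Var[X; μ] = 0 := by
    rw [variance_eq_sub hX]
    simp [hmean, hsq]
  exact hmean ▸ ae_eq_integral_of_variance_eq_zero hX hvar

end ProbabilityTheory

theorem stmt_3 {Ω : Type*} [m0 : MeasurableSpace Ω] (μ : Measure Ω) [IsProbabilityMeasure μ]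
    (B : Set Ω) (hB : MeasurableSet B)
    (hB0 : 0 < (μ B).toReal) (hB1 : (μ B).toReal < 1)
    (m : MeasurableSpace Ω) (hm : m ≤ m0)
    (X : Ω → ℝ) (hX : X = MeasureTheory.condExp m μ (B.indicator fun _ => (1 : ℝ)))
    (hdist : @Measure.map Ω ℝ m0 _ X (μ[|B]) = @Measure.map Ω ℝ m0 _ X (μ[|Bᶜ])) :
    X =ᵐ[μ] fun _ => (μ B).toReal := by
  -- the binder `m` is a local instance too; make `m0` the ambient σ-algebra again
  let : MeasurableSpace Ω := m0
  set p := (μ B).toReal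
  have hXmeas : Measurable X := hX ▸ (stronglyMeasurable_condExp.mono hm).measurable
  have hXL2 : MemLp X 2 μ := MemLp.of_bound hXmeas.aestronglyMeasurable 1
    (by simpa [hX] using ae_abs_condExp_indicator_one_le (m := m) (μ := μ) B)
  have hmean : ∫ ω, X ω ∂μ = p := by
    rw [hX, integral_condExp hm, integral_indicator_const _ hB]
    simp [p, measureReal_def]
  have hsq : ∫ ω, X ω ^ 2 ∂μ = ∫ ω in B, X ω ∂μ := hX ▸ integral_condExp_indicator_sq hm hB
  have hsplit : ∫ ω in B, X ω ∂μ + ∫ ω in Bᶜ, X ω ∂μ = p :=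
    (integral_add_compl hB (hXL2.integrable one_le_two)).trans hmean
  have hcond : p⁻¹ * ∫ ω in B, X ω ∂μ = (1 - p)⁻¹ * ∫ ω in Bᶜ, X ω ∂μ := by
    have := (IdentDistrib.integral_eq ⟨hXmeas.aemeasurable, hXmeas.aemeasurable, hdist⟩ :
      ∫ ω, X ω ∂μ[|B] = ∫ ω, X ω ∂μ[|Bᶜ])
    rwa [integral_cond, integral_cond, ← measureReal_def, ← measureReal_def,
      probReal_compl_eq_one_sub hB] at this
  have hB_int : ∫ ω in B, X ω ∂μ = p ^ 2 := by
    have : 1 - p ≠ 0 := by linarith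
    field_simp at hcond
    nlinarith
  exact ae_eq_const_of_integral_sq_eq hXL2 hmean (hsq.trans hB_int)
end

section
/- For any 2×2 stochastic matrix P = (p_ij) with nonnegative entries and row sums 1, the inequality (√(p₀₀p₁₁) - √(p₀₁p₁₀))² ≤ (p₁₀ - p₀₀)(p₀₁ - p₁₁) / min(p₀₀ + p₁₀, p₀₁ + p₁₁) holds whenever the denominator is nonzero and the right-hand side numerator is nonnegative. -/
theorem stmt_4 (p₀₀ p₀₁ p₁₀ p₁₁ : ℝ)
    (h00 : 0 ≤ p₀₀) (h01 : 0 ≤ p₀₁) (h10 : 0 ≤ p₁₀) (h11 : 0 ≤ p₁₁)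
    (hrow0 : p₀₀ + p₀₁ = 1) (hrow1 : p₁₀ + p₁₁ = 1)
    (hden : min (p₀₀ + p₁₀) (p₀₁ + p₁₁) ≠ 0)
    (hnum : 0 ≤ (p₁₀ - p₀₀) * (p₀₁ - p₁₁)) :
    (Real.sqrt (p₀₀ * p₁₁) - Real.sqrt (p₀₁ * p₁₀)) ^ 2
      ≤ (p₁₀ - p₀₀) * (p₀₁ - p₁₁) / min (p₀₀ + p₁₀) (p₀₁ + p₁₁) := by
  have hb : p₀₁ = 1 - p₀₀ := by linarith
  have hd : p₁₁ = 1 - p₁₀ := by linarith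
  subst hb hd
  set a := p₀₀ with ha'
  set c := p₁₀ with hc'
  have ha1 : a ≤ 1 := by linarith
  have hc1 : c ≤ 1 := by linarith
  set s := Real.sqrt (a * (1 - c)) with hs'
  set t := Real.sqrt ((1 - a) * c) with ht'
  have hs : s ^ 2 = a * (1 - c) := Real.sq_sqrt (by positivity)
  have ht : t ^ 2 = (1 - a) * c := Real.sq_sqrt (by positivity)
  have hsn : 0 ≤ s := Real.sqrt_nonneg _
  have htn : 0 ≤ t := Real.sqrt_nonneg _
  have hst : s * t = Real.sqrt (a * (1 - c) * ((1 - a) * c)) :=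
    (Real.sqrt_mul (by positivity) _).symm
  set m := min (a + c) (1 - a + (1 - c)) with hm'
  have hm0 : 0 < m := lt_of_le_of_ne (le_min (by linarith) (by linarith)) (Ne.symm hden)
  have hmin : m ≤ (s + t) ^ 2 := by
    rcases le_total (a + c) (1 - a + (1 - c)) with h | h
    · have h1 : a * c ≤ Real.sqrt (a * (1 - c) * ((1 - a) * c)) := by
        rw [show a * c = Real.sqrt ((a * c) ^ 2) from (Real.sqrt_sq (by positivity)).symm]
        exact Real.sqrt_le_sqrt (by nlinarith [mul_nonneg (mul_nonneg h00 h10) (show (0:ℝ) ≤ 1 - a - c by linarith)])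
      rw [hm', min_eq_left h]
      nlinarith
    · have h1 : (1 - a) * (1 - c) ≤ Real.sqrt (a * (1 - c) * ((1 - a) * c)) := by
        rw [show (1 - a) * (1 - c) = Real.sqrt (((1 - a) * (1 - c)) ^ 2) from
          (Real.sqrt_sq (by positivity)).symm]
        exact Real.sqrt_le_sqrt (by nlinarith [mul_nonneg (mul_nonneg h01 h11) (show (0:ℝ) ≤ a + c - 1 by linarith)])
      rw [hm', min_eq_right h]
      nlinarith
  have hnum' : (c - a) * ((1 - a) - (1 - c)) = (a - c) ^ 2 := by ring
  rcases eq_or_lt_of_le (add_nonneg hsn htn) with hsum | hsum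
  · have hs0 : s = 0 := by linarith [abs_nonneg t]
    have ht0 : t = 0 := by linarith
    rw [hs0, ht0]
    have : (0:ℝ) ≤ (a - c) ^ 2 / m := by positivity
    calc ((0:ℝ) - 0) ^ 2 = 0 := by ring
    _ ≤ (a - c) ^ 2 / m := this
    _ = (c - a) * ((1 - a) - (1 - c)) / m := by rw [hnum']
  · have key : (s - t) ^ 2 * (s + t) ^ 2 = (a - c) ^ 2 := by nlinarith
    have hlhs : (s - t) ^ 2 = (a - c) ^ 2 / (s + t) ^ 2 := by
      field_simp
      nlinarith
    rw [hlhs, show (c - a) * ((1 - a) - (1 - c)) = (a - c) ^ 2 from by ring]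
    exact div_le_div_of_nonneg_left (by positivity) hm0 hmin
end

section
/- Let p₀₀, p₀₁, p₁₀, p₁₁ ∈ (0,1) with p₀₀ + p₀₁ = 1, p₁₀ + p₁₁ = 1 and p₀₁ ≠ p₁₁. Define c₀ = p₀₁/p₀₀, c₁ = p₁₁/p₁₀, and f(x) = (p₁₁ - p₀₁) · ln(1 + (c₀ - c₁)/(eˣ + c₁)). Then sup over x ∈ ℝ of f'(x) equals (√(p₀₀p₁₁) - √(p₀₁p₁₀))², and this supremum is attained at x = (1/2)(ln(p₀₁p₁₁) - ln(p₀₀p₁₀)). -/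
/-!
Writing `t = eˣ`, one computes `f' x = K t / ((t + c₀) (t + c₁))` with
`K = (p₁₁ - p₀₁)(c₁ - c₀) = (p₁₁ - p₀₁)² / (p₀₀ p₁₀) ≥ 0`. The identity
`(t + c₀)(t + c₁) = t (√c₀ + √c₁)² + (t - √(c₀ c₁))²` bounds this by `K / (√c₀ + √c₁)²`,
with equality at `t = √(c₀ c₁)`, i.e. at the given point `x`; the row sums turn
`K / (√c₀ + √c₁)²` into `(√(p₀₀ p₁₁) - √(p₀₁ p₁₀))²`.
-/

open Real

lemma add_mul_add_eq_mul_sq_sqrt_add_sqrt_add_sq {c₀ c₁ : ℝ} (hc₀ : 0 ≤ c₀) (hc₁ : 0 ≤ c₁)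
    (t : ℝ) :
    (t + c₀) * (t + c₁) = t * (√c₀ + √c₁) ^ 2 + (t - √c₀ * √c₁) ^ 2 := by
  linear_combination (-(t + c₁)) * sq_sqrt hc₀ - (t + √c₀ ^ 2) * sq_sqrt hc₁

lemma mul_div_add_mul_add_le {K c₀ c₁ t : ℝ} (hK : 0 ≤ K) (hc₀ : 0 < c₀) (hc₁ : 0 < c₁)
    (ht : 0 ≤ t) :
    K * t / ((t + c₀) * (t + c₁)) ≤ K / (√c₀ + √c₁) ^ 2 := by
  have hS : 0 < (√c₀ + √c₁) ^ 2 := by positivity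
  rw [div_le_div_iff₀ (by positivity) hS,
    add_mul_add_eq_mul_sq_sqrt_add_sqrt_add_sq hc₀.le hc₁.le]
  nlinarith [mul_nonneg hK (sq_nonneg (t - √c₀ * √c₁))]

lemma mul_div_add_mul_add_sqrt_mul (K : ℝ) {c₀ c₁ : ℝ} (hc₀ : 0 < c₀) (hc₁ : 0 < c₁) :
    K * √(c₀ * c₁) / ((√(c₀ * c₁) + c₀) * (√(c₀ * c₁) + c₁)) = K / (√c₀ + √c₁) ^ 2 := by
  rw [add_mul_add_eq_mul_sq_sqrt_add_sqrt_add_sq hc₀.le hc₁.le, sqrt_mul hc₀.le, sub_self,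
    zero_pow two_ne_zero, add_zero, mul_comm K, mul_div_mul_left _ _ (by positivity)]

lemma hasDerivAt_log_one_add_div_exp_add {c₀ c₁ : ℝ} (hc₀ : 0 ≤ c₀) (hc₁ : 0 ≤ c₁) (x : ℝ) :
    HasDerivAt (fun x => log (1 + (c₀ - c₁) / (exp x + c₁)))
      ((c₁ - c₀) * exp x / ((exp x + c₀) * (exp x + c₁))) x := by
  have hpos : ∀ {c : ℝ}, 0 ≤ c → ∀ y, 0 < exp y + c := fun hc y => by positivity
  have hsplit : (fun x => log (1 + (c₀ - c₁) / (exp x + c₁))) =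
      fun x => log (exp x + c₀) - log (exp x + c₁) := by
    funext y
    rw [← log_div (hpos hc₀ y).ne' (hpos hc₁ y).ne']
    congr 1
    field_simp [(hpos hc₁ y).ne']
    ring
  have hlog : ∀ {c : ℝ}, 0 ≤ c →
      HasDerivAt (fun y => log (exp y + c)) (exp x / (exp x + c)) x := fun hc =>
    ((hasDerivAt_exp x).add_const _).log (hpos hc x).ne'
  rw [hsplit]
  refine ((hlog hc₀).sub (hlog hc₁)).congr_deriv ?_
  field_simp [(hpos hc₀ x).ne', (hpos hc₁ x).ne']
  ring

lemma exp_half_mul_log_sub_log {a b : ℝ} (ha : 0 < a) (hb : 0 < b) :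
    exp (1 / 2 * (log a - log b)) = √(a / b) := by
  rw [sqrt_eq_rpow, rpow_def_of_pos (div_pos ha hb), log_div ha.ne' hb.ne', mul_comm]

section RowStochastic

variable {p₀₀ p₀₁ p₁₀ p₁₁ : ℝ}

lemma sub_mul_div_sub_div_eq_sq_div (hrow0 : p₀₀ + p₀₁ = 1) (hrow1 : p₁₀ + p₁₁ = 1)
    (hp₀₀ : p₀₀ ≠ 0) (hp₁₀ : p₁₀ ≠ 0) :
    (p₁₁ - p₀₁) * (p₁₁ / p₁₀ - p₀₁ / p₀₀) = (p₁₁ - p₀₁) ^ 2 / (p₀₀ * p₁₀) := by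
  field_simp
  linear_combination (p₁₁ - p₀₁) * (p₁₁ * hrow0 - p₀₁ * hrow1)

lemma sub_mul_div_sub_div_div_sq_sqrt_add_sqrt (hrow0 : p₀₀ + p₀₁ = 1)
    (hrow1 : p₁₀ + p₁₁ = 1) (hp₀₀ : 0 < p₀₀) (hp₀₁ : 0 < p₀₁) (hp₁₀ : 0 < p₁₀) (hp₁₁ : 0 < p₁₁) :
    (p₁₁ - p₀₁) * (p₁₁ / p₁₀ - p₀₁ / p₀₀) / (√(p₀₁ / p₀₀) + √(p₁₁ / p₁₀)) ^ 2 =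
      (√(p₀₀ * p₁₁) - √(p₀₁ * p₁₀)) ^ 2 := by
  have hq : 0 < p₀₀ * p₁₀ := by positivity
  have h₀ : √(p₀₁ / p₀₀) * √(p₀₀ * p₁₀) = √(p₀₁ * p₁₀) := by
    rw [← sqrt_mul (by positivity)]; congr 1; field_simp
  have h₁ : √(p₁₁ / p₁₀) * √(p₀₀ * p₁₀) = √(p₀₀ * p₁₁) := by
    rw [← sqrt_mul (by positivity)]; congr 1; field_simp
  have hS : p₀₀ * p₁₀ * (√(p₀₁ / p₀₀) + √(p₁₁ / p₁₀)) ^ 2 =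
      (√(p₀₀ * p₁₁) + √(p₀₁ * p₁₀)) ^ 2 := by
    rw [← h₀, ← h₁]
    linear_combination (-(√(p₀₁ / p₀₀) + √(p₁₁ / p₁₀)) ^ 2) * sq_sqrt hq.le
  have hdiff : p₁₁ - p₀₁ = √(p₀₀ * p₁₁) ^ 2 - √(p₀₁ * p₁₀) ^ 2 := by
    rw [sq_sqrt (by positivity), sq_sqrt (by positivity)]
    linear_combination (-p₁₁) * hrow0 + p₀₁ * hrow1
  have hsum : 0 < √(p₀₀ * p₁₁) + √(p₀₁ * p₁₀) := by positivity
  rw [sub_mul_div_sub_div_eq_sq_div hrow0 hrow1 hp₀₀.ne' hp₁₀.ne', div_div, hS, hdiff,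
    div_eq_iff (by positivity)]
  ring

end RowStochastic

theorem stmt_6_general (p₀₀ p₀₁ p₁₀ p₁₁ : ℝ)
    (h00 : p₀₀ ∈ Set.Ioo (0:ℝ) 1) (h01 : p₀₁ ∈ Set.Ioo (0:ℝ) 1)
    (h10 : p₁₀ ∈ Set.Ioo (0:ℝ) 1) (h11 : p₁₁ ∈ Set.Ioo (0:ℝ) 1)
    (hrow0 : p₀₀ + p₀₁ = 1) (hrow1 : p₁₀ + p₁₁ = 1)
    (c₀ c₁ : ℝ) (hc₀ : c₀ = p₀₁ / p₀₀) (hc₁ : c₁ = p₁₁ / p₁₀)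
    (f : ℝ → ℝ)
    (hf : f = fun x => (p₁₁ - p₀₁) * Real.log (1 + (c₀ - c₁) / (Real.exp x + c₁))) :
    (⨆ x : ℝ, deriv f x) = (Real.sqrt (p₀₀ * p₁₁) - Real.sqrt (p₀₁ * p₁₀)) ^ 2 ∧
    deriv f ((1 / 2) * (Real.log (p₀₁ * p₁₁) - Real.log (p₀₀ * p₁₀)))
      = (Real.sqrt (p₀₀ * p₁₁) - Real.sqrt (p₀₁ * p₁₀)) ^ 2 := by
  obtain ⟨hp₀₀, -⟩ := h00
  obtain ⟨hp₀₁, -⟩ := h01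
  obtain ⟨hp₁₀, -⟩ := h10
  obtain ⟨hp₁₁, -⟩ := h11
  have hc₀pos : 0 < c₀ := hc₀ ▸ div_pos hp₀₁ hp₀₀
  have hc₁pos : 0 < c₁ := hc₁ ▸ div_pos hp₁₁ hp₁₀
  have hK : 0 ≤ (p₁₁ - p₀₁) * (c₁ - c₀) := by
    rw [hc₀, hc₁, sub_mul_div_sub_div_eq_sq_div hrow0 hrow1 hp₀₀.ne' hp₁₀.ne']
    positivity
  have hmax : (p₁₁ - p₀₁) * (c₁ - c₀) / (√c₀ + √c₁) ^ 2 =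
      (√(p₀₀ * p₁₁) - √(p₀₁ * p₁₀)) ^ 2 := by
    rw [hc₀, hc₁]
    exact sub_mul_div_sub_div_div_sq_sqrt_add_sqrt hrow0 hrow1 hp₀₀ hp₀₁ hp₁₀ hp₁₁
  have hderiv : ∀ x, deriv f x =
      (p₁₁ - p₀₁) * (c₁ - c₀) * exp x / ((exp x + c₀) * (exp x + c₁)) := fun x => by
    rw [hf, ((hasDerivAt_log_one_add_div_exp_add hc₀pos.le hc₁pos.le x).const_mul _).deriv]
    ring
  have hle : ∀ x, deriv f x ≤ (√(p₀₀ * p₁₁) - √(p₀₁ * p₁₀)) ^ 2 := fun x => by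
    rw [hderiv, ← hmax]
    exact mul_div_add_mul_add_le hK hc₀pos hc₁pos (exp_pos x).le
  have hx₀ : exp ((1 / 2) * (log (p₀₁ * p₁₁) - log (p₀₀ * p₁₀))) = √(c₀ * c₁) := by
    rw [exp_half_mul_log_sub_log (by positivity) (by positivity), hc₀, hc₁, div_mul_div_comm]
  have heq : deriv f ((1 / 2) * (log (p₀₁ * p₁₁) - log (p₀₀ * p₁₀))) =
      (√(p₀₀ * p₁₁) - √(p₀₁ * p₁₀)) ^ 2 := by
    rw [hderiv, hx₀, mul_div_add_mul_add_sqrt_mul _ hc₀pos hc₁pos, hmax]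
  exact ⟨IsGreatest.csSup_eq ⟨⟨_, heq⟩, Set.forall_mem_range.2 hle⟩, heq⟩

theorem stmt_6 (p₀₀ p₀₁ p₁₀ p₁₁ : ℝ)
    (h00 : p₀₀ ∈ Set.Ioo (0:ℝ) 1) (h01 : p₀₁ ∈ Set.Ioo (0:ℝ) 1)
    (h10 : p₁₀ ∈ Set.Ioo (0:ℝ) 1) (h11 : p₁₁ ∈ Set.Ioo (0:ℝ) 1)
    (hrow0 : p₀₀ + p₀₁ = 1) (hrow1 : p₁₀ + p₁₁ = 1) (hne : p₀₁ ≠ p₁₁)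
    (c₀ c₁ : ℝ) (hc₀ : c₀ = p₀₁ / p₀₀) (hc₁ : c₁ = p₁₁ / p₁₀)
    (f : ℝ → ℝ)
    (hf : f = fun x => (p₁₁ - p₀₁) * Real.log (1 + (c₀ - c₁) / (Real.exp x + c₁))) :
    (⨆ x : ℝ, deriv f x) = (Real.sqrt (p₀₀ * p₁₁) - Real.sqrt (p₀₁ * p₁₀)) ^ 2 ∧
    deriv f ((1 / 2) * (Real.log (p₀₁ * p₁₁) - Real.log (p₀₀ * p₁₀)))
      = (Real.sqrt (p₀₀ * p₁₁) - Real.sqrt (p₀₁ * p₁₀)) ^ 2 :=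
  stmt_6_general p₀₀ p₀₁ p₁₀ p₁₁ h00 h01 h10 h11 hrow0 hrow1 c₀ c₁ hc₀ hc₁ f hf
end

section
/- For all real x and all y ≥ x, and for a stochastic matrix with entries p₀₀, p₀₁, p₁₀, p₁₁ ∈ (0,1) satisfying the conditions above with p₀₁ ≠ p₁₁, the function f(x) = (p₁₁ - p₀₁)·ln(1 + (c₀ - c₁)/(eˣ + c₁)) with c₀ = p₀₁/p₀₀, c₁ = p₁₁/p₁₀ satisfies 0 ≤ f(y) - f(x) ≤ (√(p₀₀p₁₁) - √(p₀₁p₁₀))² · (y - x). -/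
/-!
Writing `1 + (c₀ - c₁) / (eᵗ + c₁) = (eᵗ + c₀) / (eᵗ + c₁)`, the derivative of `f` is
`(p₁₁ - p₀₁) (c₁ - c₀) eᵗ / ((eᵗ + c₀)(eᵗ + c₁))`. Because the rows sum to one,
`(p₁₁ - p₀₁)(c₁ - c₀) = (√(p₀₀p₁₁) - √(p₀₁p₁₀))² (√c₀ + √c₁)²`, and by AM-GM
`eᵗ (√c₀ + √c₁)² ≤ (eᵗ + c₀)(eᵗ + c₁)`. Hence `f'` takes values in `[0, (√(p₀₀p₁₁) - √(p₀₁p₁₀))²]`,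
and the mean value theorem gives both inequalities.
-/

open Real

lemma sub_nonneg_and_sub_le_mul_of_hasDerivAt {f f' : ℝ → ℝ} {L : ℝ}
    (hf : ∀ t, HasDerivAt f (f' t) t) (hf' : ∀ t, f' t ∈ Set.Icc 0 L) {x y : ℝ} (hxy : x ≤ y) :
    0 ≤ f y - f x ∧ f y - f x ≤ L * (y - x) := by
  have hdiff : Differentiable ℝ f := fun t => (hf t).differentiableAt
  refine ⟨sub_nonneg.2 (monotone_of_deriv_nonneg hdiff (fun t => ?_) hxy),
    image_sub_le_mul_sub_of_deriv_le hdiff (fun t => ?_) hxy⟩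
  · exact (hf t).deriv ▸ (hf' t).1
  · exact (hf t).deriv ▸ (hf' t).2

lemma hasDerivAt_log_one_add_div_exp_add_s7 {a b : ℝ} (ha : 0 ≤ a) (hb : 0 ≤ b) (t : ℝ) :
    HasDerivAt (fun s => log (1 + (a - b) / (exp s + b)))
      ((b - a) * exp t / ((exp t + a) * (exp t + b))) t := by
  have hquot : 1 + (a - b) / (exp t + b) = (exp t + a) / (exp t + b) := by
    field_simp
    ring
  have hdiv : HasDerivAt (fun s => (a - b) / (exp s + b))
      ((0 * (exp t + b) - (a - b) * exp t) / (exp t + b) ^ 2) t :=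
    (hasDerivAt_const t (a - b)).div ((hasDerivAt_exp t).add_const b) (by positivity)
  have h := (hdiv.const_add 1).log (by rw [hquot]; positivity)
  refine h.congr_deriv ?_
  rw [hquot]
  field_simp
  ring

lemma sq_sqrt_add_sqrt_mul_div_le_one {a b s : ℝ} (ha : 0 ≤ a) (hb : 0 ≤ b) (hs : 0 ≤ s) :
    (√a + √b) ^ 2 * s / ((s + a) * (s + b)) ≤ 1 :=
  div_le_one_of_le₀ (by nlinarith [sq_nonneg (s - √a * √b), sq_sqrt ha, sq_sqrt hb])
    (by positivity)

lemma sub_mul_div_sub_div_eq_sq_mul_sq {p₀₀ p₀₁ p₁₀ p₁₁ : ℝ}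
    (h00 : 0 < p₀₀) (h01 : 0 ≤ p₀₁) (h10 : 0 < p₁₀) (h11 : 0 ≤ p₁₁)
    (hrow0 : p₀₀ + p₀₁ = 1) (hrow1 : p₁₀ + p₁₁ = 1) :
    (p₁₁ - p₀₁) * (p₁₁ / p₁₀ - p₀₁ / p₀₀) =
      (√(p₀₀ * p₁₁) - √(p₀₁ * p₁₀)) ^ 2 * (√(p₀₁ / p₀₀) + √(p₁₁ / p₁₀)) ^ 2 := by
  rw [sqrt_mul h00.le, sqrt_mul h01, sqrt_div h01, sqrt_div h11]
  obtain ⟨a, ha, rfl⟩ : ∃ a, 0 < a ∧ p₀₀ = a ^ 2 := ⟨√p₀₀, sqrt_pos.2 h00, (sq_sqrt h00.le).symm⟩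
  obtain ⟨b, hb, rfl⟩ : ∃ b, 0 ≤ b ∧ p₀₁ = b ^ 2 := ⟨√p₀₁, sqrt_nonneg _, (sq_sqrt h01).symm⟩
  obtain ⟨c, hc, rfl⟩ : ∃ c, 0 < c ∧ p₁₀ = c ^ 2 := ⟨√p₁₀, sqrt_pos.2 h10, (sq_sqrt h10.le).symm⟩
  obtain ⟨d, hd, rfl⟩ : ∃ d, 0 ≤ d ∧ p₁₁ = d ^ 2 := ⟨√p₁₁, sqrt_nonneg _, (sq_sqrt h11).symm⟩
  simp only [sqrt_sq ha.le, sqrt_sq hb, sqrt_sq hc.le, sqrt_sq hd]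
  have hdet : d ^ 2 * a ^ 2 - b ^ 2 * c ^ 2 = d ^ 2 - b ^ 2 := by
    linear_combination d ^ 2 * hrow0 - b ^ 2 * hrow1
  field_simp
  linear_combination (b ^ 2 * c ^ 2 - d ^ 2 * a ^ 2) * hdet

theorem stmt_7_general (p₀₀ p₀₁ p₁₀ p₁₁ : ℝ)
    (h00 : p₀₀ ∈ Set.Ioo (0:ℝ) 1) (h01 : p₀₁ ∈ Set.Ioo (0:ℝ) 1)
    (h10 : p₁₀ ∈ Set.Ioo (0:ℝ) 1) (h11 : p₁₁ ∈ Set.Ioo (0:ℝ) 1)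
    (hrow0 : p₀₀ + p₀₁ = 1) (hrow1 : p₁₀ + p₁₁ = 1)
    (c₀ c₁ : ℝ) (hc₀ : c₀ = p₀₁ / p₀₀) (hc₁ : c₁ = p₁₁ / p₁₀)
    (f : ℝ → ℝ)
    (hf : f = fun x => (p₁₁ - p₀₁) * Real.log (1 + (c₀ - c₁) / (Real.exp x + c₁)))
    (x y : ℝ) (hxy : x ≤ y) :
    0 ≤ f y - f x ∧
    f y - f x ≤ (Real.sqrt (p₀₀ * p₁₁) - Real.sqrt (p₀₁ * p₁₀)) ^ 2 * (y - x) := by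
  obtain ⟨h00, -⟩ := h00
  obtain ⟨h01, -⟩ := h01
  obtain ⟨h10, -⟩ := h10
  obtain ⟨h11, -⟩ := h11
  have hc₀nn : 0 ≤ c₀ := hc₀ ▸ div_nonneg h01.le h00.le
  have hc₁nn : 0 ≤ c₁ := hc₁ ▸ div_nonneg h11.le h10.le
  set L := (√(p₀₀ * p₁₁) - √(p₀₁ * p₁₀)) ^ 2
  have hcoeff : (p₁₁ - p₀₁) * (c₁ - c₀) = L * (√c₀ + √c₁) ^ 2 := by
    rw [hc₀, hc₁]
    exact sub_mul_div_sub_div_eq_sq_mul_sq h00 h01.le h10 h11.le hrow0 hrow1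
  refine sub_nonneg_and_sub_le_mul_of_hasDerivAt
    (f' := fun t => (p₁₁ - p₀₁) * ((c₁ - c₀) * exp t / ((exp t + c₀) * (exp t + c₁))))
    (fun t => ?_) (fun t => ?_) hxy
  · exact hf ▸ (hasDerivAt_log_one_add_div_exp_add_s7 hc₀nn hc₁nn t).const_mul (p₁₁ - p₀₁)
  · have hratio := sq_sqrt_add_sqrt_mul_div_le_one hc₀nn hc₁nn (exp_pos t).le
    rw [← mul_div_assoc, ← mul_assoc, hcoeff, mul_assoc, mul_div_assoc]
    exact ⟨by positivity, mul_le_of_le_one_right (sq_nonneg _) hratio⟩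

theorem stmt_7 (p₀₀ p₀₁ p₁₀ p₁₁ : ℝ)
    (h00 : p₀₀ ∈ Set.Ioo (0:ℝ) 1) (h01 : p₀₁ ∈ Set.Ioo (0:ℝ) 1)
    (h10 : p₁₀ ∈ Set.Ioo (0:ℝ) 1) (h11 : p₁₁ ∈ Set.Ioo (0:ℝ) 1)
    (hrow0 : p₀₀ + p₀₁ = 1) (hrow1 : p₁₀ + p₁₁ = 1) (hne : p₀₁ ≠ p₁₁)
    (c₀ c₁ : ℝ) (hc₀ : c₀ = p₀₁ / p₀₀) (hc₁ : c₁ = p₁₁ / p₁₀)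
    (f : ℝ → ℝ)
    (hf : f = fun x => (p₁₁ - p₀₁) * Real.log (1 + (c₀ - c₁) / (Real.exp x + c₁)))
    (x y : ℝ) (hxy : x ≤ y) :
    0 ≤ f y - f x ∧
    f y - f x ≤ (Real.sqrt (p₀₀ * p₁₁) - Real.sqrt (p₀₁ * p₁₀)) ^ 2 * (y - x) :=
  stmt_7_general p₀₀ p₀₁ p₁₀ p₁₁ h00 h01 h10 h11 hrow0 hrow1 c₀ c₁ hc₀ hc₁ f hf x y hxy
end

section
/- Let k ≥ 1 and w > 0 with λ = w(1+w)^k, and let f(x) = -(w/(1+w))·ln(1 + w·e^{-x}). For any reals L₁ ≤ 0 ≤ L₀ with L₁ ≥ -k·ln(1+w), we have 0 ≤ f(L₀) - f(L₁) ≤ (L₀ - L₁)·(w/(k(1+w)))·(ln(1+λ)/ln(1+w) - 1). -/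
/-!
The function `f` is `-(w / (1 + w))` times `g x = log (1 + w e^{-x})`, and `g` is decreasing and
convex (its derivative `-w / (e^x + w)` increases), so `f` is increasing and concave. Concavity
bounds the slope of `f` over `[L₁, L₀]` by its slope over `[-k log (1 + w), 0]`, an interval lying
to the left of both endpoints; since `exp (k log (1 + w)) = (1 + w)^k`, that slope is exactly the
constant `w / (k (1 + w)) * (log (1 + λ) / log (1 + w) - 1)`.
-/

open Real Set

theorem ConcaveOn.sub_le_mul_slope {𝕜 : Type*} [Field 𝕜] [LinearOrder 𝕜] [IsStrictOrderedRing 𝕜]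
    {s : Set 𝕜} {f : 𝕜 → 𝕜} (hf : ConcaveOn 𝕜 s f) {a b x y : 𝕜} (ha : a ∈ s) (hb : b ∈ s)
    (hx : x ∈ s) (hy : y ∈ s) (hab : a < b) (hax : a ≤ x) (hby : b ≤ y) (hxy : x ≤ y) :
    f y - f x ≤ (y - x) * slope f a b := by
  rcases hxy.eq_or_lt with rfl | hxy
  · simp
  have hay : a < y := hab.trans_le hby
  have h_left : slope f x y ≤ slope f a y := by
    rw [slope_comm f x, slope_comm f a]
    exact hf.slope_anti hy ⟨ha, hay.ne⟩ ⟨hx, hxy.ne⟩ hax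
  have h_right : slope f a y ≤ slope f a b :=
    hf.slope_anti ha ⟨hb, hab.ne'⟩ ⟨hy, hay.ne'⟩ hby
  rw [slope_def_field] at h_left
  calc f y - f x = (y - x) * ((f y - f x) / (y - x)) := by field_simp [(sub_pos.2 hxy).ne']
    _ ≤ (y - x) * slope f a b := by gcongr; exact h_left.trans h_right

theorem Real.hasDerivAt_log_one_add_mul_exp_neg {w : ℝ} (hw : 0 ≤ w) (x : ℝ) :
    HasDerivAt (fun x => log (1 + w * exp (-x))) (-(w / (exp x + w))) x := by
  have hpos : 0 < 1 + w * exp (-x) := by positivity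
  refine (((((hasDerivAt_neg x).exp).const_mul w).const_add 1).log hpos.ne').congr_deriv ?_
  rw [exp_neg] at hpos ⊢
  field_simp

theorem Real.convexOn_log_one_add_mul_exp_neg {w : ℝ} (hw : 0 ≤ w) :
    ConvexOn ℝ univ (fun x => log (1 + w * exp (-x))) := by
  have hderiv := hasDerivAt_log_one_add_mul_exp_neg hw
  refine Monotone.convexOn_univ_of_deriv (fun x => (hderiv x).differentiableAt) ?_
  intro a b hab
  simp only [(hderiv _).deriv, neg_le_neg_iff]
  gcongr

theorem Real.antitone_log_one_add_mul_exp_neg {w : ℝ} (hw : 0 ≤ w) :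
    Antitone (fun x => log (1 + w * exp (-x))) := by
  intro a b hab
  dsimp only
  gcongr

theorem stmt_15 (k : ℕ) (hk : 1 ≤ k) (w : ℝ) (hw : 0 < w)
    (lam : ℝ) (hlam : lam = w * (1 + w) ^ k)
    (f : ℝ → ℝ)
    (hf : f = fun x => -(w / (1 + w)) * Real.log (1 + w * Real.exp (-x)))
    (L₀ L₁ : ℝ) (hL₁0 : L₁ ≤ 0) (h0L₀ : 0 ≤ L₀) (hL₁low : -(k * Real.log (1 + w)) ≤ L₁) :
    0 ≤ f L₀ - f L₁ ∧
    f L₀ - f L₁ ≤ (L₀ - L₁) * (w / (k * (1 + w))) *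
      (Real.log (1 + lam) / Real.log (1 + w) - 1) := by
  have hc : 0 ≤ w / (1 + w) := by positivity
  have hf_mono : Monotone f := by
    subst hf
    exact fun a b hab => mul_le_mul_of_nonpos_left (antitone_log_one_add_mul_exp_neg hw.le hab)
      (neg_nonpos.2 hc)
  have hf_concave : ConcaveOn ℝ univ f := by
    have hf' : f = -((w / (1 + w)) • fun x => log (1 + w * exp (-x))) := by
      rw [hf]; ext x; simp
    rw [hf']
    exact ((convexOn_log_one_add_mul_exp_neg hw.le).smul hc).neg
  have hk0 : (0 : ℝ) < k := by exact_mod_cast hk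
  have hlog : 0 < log (1 + w) := log_pos (by linarith)
  set m : ℝ := k * log (1 + w)
  have h_exp_m : exp m = (1 + w) ^ k := by rw [exp_nat_mul, exp_log (by linarith)]
  have h_slope : slope f (-m) 0 = w / (k * (1 + w)) * (log (1 + lam) / log (1 + w) - 1) := by
    simp only [slope_def_field, hf, neg_neg, h_exp_m, ← hlam, neg_zero, exp_zero, mul_one, m]
    field_simp
    ring
  refine ⟨sub_nonneg.2 (hf_mono (hL₁0.trans h0L₀)), ?_⟩
  calc f L₀ - f L₁ ≤ (L₀ - L₁) * slope f (-m) 0 :=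
        hf_concave.sub_le_mul_slope trivial trivial trivial trivial
          (neg_lt_zero.2 (mul_pos hk0 hlog)) hL₁low h0L₀ (hL₁0.trans h0L₀)
    _ = _ := by rw [h_slope, mul_assoc]
end
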